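/- arXiv:2306.06730 — 2 statements merged into one kernel-verified Lean document; each statement's English description precedes it below -/
import Mathlib

section
/- Assume (A1)–(A4) and let ϑ(n) := inf{k ≥ 0 : S_k > n} be the first passage time of the random walk (S_k). Then both tail probabilities of the randomly stopped embedded process satisfy P{Z_{S_{ϑ(n)}} > 0} ~ m^{1/2} C_Embed / √n and P{Z_{S_{ϑ(n)−1}} > 0} ~ m^{1/2} C_Embed / √n as n → ∞, where C_Embed > 0 is the constant with √n P{Z_{S_n} > 0} → C_Embed; consequently the constant in the survival asymptotics of the BPSRE equals C_Sparse = m^{1/2} C_Embed. -/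
open MeasureTheory ProbabilityTheory Filter Real
open scoped ENNReal NNReal Topology

noncomputable section

namespace SparseBranching

variable {Ω : Type*} [MeasurableSpace Ω]

/-- A (deterministic or random realization of a) probability distribution on `ℕ` is represented
by its mass function `ℕ → ℝ≥0∞`. The mean `A_θ = f_θ'(1) = Σ_j j θ({j})` (extended-real valued). -/
def meanENN (θ : ℕ → ℝ≥0∞) : ℝ≥0∞ := ∑' j : ℕ, (j : ℝ≥0∞) * θ j

/-- The mean `A_θ` as a real number. -/
def meanA (θ : ℕ → ℝ≥0∞) : ℝ := (meanENN θ).toReal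

/-- The standardized truncated second moment `κ(f_θ; a) = A_θ⁻² Σ_{j ≥ a} j² θ({j})`. -/
def kappa (θ : ℕ → ℝ≥0∞) (a : ℕ) : ℝ :=
  (∑' j : ℕ, if a ≤ j then (j : ℝ≥0∞) ^ 2 * θ j else 0).toReal / meanA θ ^ 2

/-- Mass of a set `B ⊆ ℕ` under the distribution `θ`. -/
def mass (θ : ℕ → ℝ≥0∞) (B : Set ℕ) : ℝ≥0∞ := ∑' j : ℕ, B.indicator θ j

/-- The data of a branching process `(Z_n)` in a sparse random environment: a fixed offspring
distribution `μ`, an i.i.d. sequence of pairs `(d k, ν k)` (representing `(d_{k+1}, ν_{k+1})` of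
the paper, with `ν` independent of `d` in each pair), offspring variables `ξ n j` and the
population sizes `Z n`, satisfying the branching recursion. -/
structure Model (Ω : Type*) [MeasurableSpace Ω] (P : Measure Ω) where
  /-- the fixed offspring distribution `μ` -/
  μ : ℕ → ℝ≥0∞
  μ_prob : ∑' j : ℕ, μ j = 1
  /-- `d k` is the variable `d_{k+1}` of the paper -/
  d : ℕ → Ω → ℕ
  d_pos : ∀ k ω, 1 ≤ d k ω
  /-- `ν k` is the random measure `ν_{k+1}` of the paper -/
  ν : ℕ → Ω → ℕ → ℝ≥0∞
  ν_prob : ∀ k ω, ∑' j : ℕ, ν k ω j = 1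
  /-- the offspring variables `ξ_j^{(n)}` -/
  ξ : ℕ → ℕ → Ω → ℕ
  /-- the branching process in sparse random environment -/
  Z : ℕ → Ω → ℕ
  Z_zero : ∀ ω, Z 0 ω = 1
  Z_rec : ∀ n ω, Z (n + 1) ω = ∑ j ∈ Finset.range (Z n ω), ξ n j ω
  meas_d : ∀ k, Measurable (d k)
  meas_ν : ∀ k, Measurable fun ω => ν k ω
  meas_ξ : ∀ n j, Measurable (ξ n j)
  /-- the environment pairs `(d_k, ν_k)` are independent -/
  env_indep : iIndepFun (fun k ω => (d k ω, ν k ω)) P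
  /-- the environment pairs are identically distributed -/
  env_ident : ∀ k, IdentDistrib (fun ω => (d k ω, ν k ω)) (fun ω => (d 0 ω, ν 0 ω)) P P
  /-- within each pair, the random measure `ν` is independent of `d` -/
  dν_indep : ∀ k, IndepFun (d k) (fun ω => ν k ω) P

variable {P : Measure Ω}

/-- The random walk `S_k = d_1 + ⋯ + d_k` of marked sites. -/
def S (M : Model Ω P) (k : ℕ) (ω : Ω) : ℕ := ∑ i ∈ Finset.range k, M.d i ω

/-- The σ-algebra generated by the environment `((d_k, ν_k))_{k ≥ 1}`. -/
def envSigma (M : Model Ω P) : MeasurableSpace Ω :=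
  ⨆ k, MeasurableSpace.comap (fun ω => (M.d k ω, M.ν k ω)) inferInstance

lemma envSigma_le (M : Model Ω P) : envSigma M ≤ ‹MeasurableSpace Ω› :=
  iSup_le fun k => ((M.meas_d k).prodMk (M.meas_ν k)).comap_le

/-- The conditional structure of the offspring variables: given the environment, the variables
`ξ_j^{(n)}` (over all generations `n` and individuals `j`) are conditionally independent; at a
marked site `n = S_k` the conditional law of `ξ_j^{(n)}` is `ν_{k+1}`, and away from the marked
sites it is `μ`. -/
structure CondLaw [StandardBorelSpace Ω] (M : Model Ω P) [IsFiniteMeasure P] : Prop where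
  cond_indep : iCondIndepFun (envSigma M) (envSigma_le M)
      (fun (p : ℕ × ℕ) ω => M.ξ p.1 p.2 ω) P
  law_marked : ∀ k n j (B : Set ℕ), ∀ᵐ ω ∂P, S M k ω = n →
      (P[(M.ξ n j ⁻¹' B).indicator (fun _ => (1 : ℝ)) | envSigma M]) ω
        = (mass (M.ν k ω) B).toReal
  law_unmarked : ∀ n j (B : Set ℕ), ∀ᵐ ω ∂P, (∀ k, S M k ω ≠ n) →
      (P[(M.ξ n j ⁻¹' B).indicator (fun _ => (1 : ℝ)) | envSigma M]) ω
        = (mass M.μ B).toReal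

/-- Assumption (A1): `E log A_1 = 0`, `0 < Var(log A_1) < ∞` and `E (log⁻ A_1)⁴ < ∞`,
where `A_1 = A_{ν_1}` is the mean of the random measure `ν_1`. -/
def A1 (M : Model Ω P) : Prop :=
  Integrable (fun ω => Real.log (meanA (M.ν 0 ω))) P ∧
  (∫ ω, Real.log (meanA (M.ν 0 ω)) ∂P) = 0 ∧
  0 < evariance (fun ω => Real.log (meanA (M.ν 0 ω))) P ∧
  evariance (fun ω => Real.log (meanA (M.ν 0 ω))) P < ⊤ ∧
  (∫⁻ ω, ENNReal.ofReal (max (-Real.log (meanA (M.ν 0 ω))) 0 ^ 4) ∂P) < ⊤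

/-- Assumption (A2): the fixed offspring distribution `μ` is critical, `A_μ = 1`. -/
def A2 (M : Model Ω P) : Prop := meanENN M.μ = 1

/-- Assumption (A3): `E d^{3/2} < ∞`. -/
def A3 (M : Model Ω P) : Prop := (∫⁻ ω, (M.d 0 ω : ℝ≥0∞) ^ (3 / 2 : ℝ) ∂P) < ⊤

/-- Assumption (A4): `E (log⁺ κ(f_ν; a))⁴ < ∞` for some `a ∈ ℕ`. -/
def A4 (M : Model Ω P) : Prop :=
  ∃ a : ℕ, 1 ≤ a ∧ (∫⁻ ω, ENNReal.ofReal (max (Real.log (kappa (M.ν 0 ω) a)) 0 ^ 4) ∂P) < ⊤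

/-- `v = sqrt(Var(log A_1))`. -/
def vol (M : Model Ω P) : ℝ := Real.sqrt (variance (fun ω => Real.log (meanA (M.ν 0 ω))) P)

/-- `m = E d`. -/
def mExp (M : Model Ω P) : ℝ := ∫ ω, (M.d 0 ω : ℝ) ∂P

/-- The first passage time `ϑ(n) = inf{k ≥ 0 : S_k > n}`. -/
def theta (M : Model Ω P) (n : ℕ) (ω : Ω) : ℕ := sInf {k | n < S M k ω}

/-- The extinction time `τ_Embed = inf{k ≥ 0 : Z_{S_k} = 0}` of the embedded process. -/
def tauE (M : Model Ω P) (ω : Ω) : ℕ := sInf {k | M.Z (S M k ω) ω = 0}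


section Helpers
variable {Ω : Type*} [MeasurableSpace Ω] {P : Measure Ω} [IsProbabilityMeasure P]

/-- Tail integrals of an integrable nonnegative function tend to zero. -/
lemma tail_small {g X : Ω → ℝ} (hg : Integrable g P) (hgpos : ∀ ω, 0 ≤ g ω)
    (hXm : Measurable X) :
    ∀ ε > (0:ℝ), ∃ c₀ : ℝ, ∀ c ≥ c₀, (∫ ω in {ω | c < X ω}, g ω ∂P) ≤ ε := by
  intro ε hε
  set T : ℝ → ℝ := fun c => ∫ ω in {ω | c < X ω}, g ω ∂P with hT
  have hmeas : ∀ c : ℝ, MeasurableSet {ω | c < X ω} := fun c =>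
    measurableSet_lt measurable_const hXm
  have hanti : ∀ c c' : ℝ, c ≤ c' → T c' ≤ T c := by
    intro c c' hcc
    apply setIntegral_mono_set hg.integrableOn
    · exact Filter.Eventually.of_forall fun ω => hgpos ω
    · exact HasSubset.Subset.eventuallyLE fun ω (h : c' < X ω) => lt_of_le_of_lt hcc h
  have hten : Tendsto (fun n : ℕ => T n) atTop (𝓝 0) := by
    have h0 : Tendsto (fun n : ℕ => ∫ ω, ({ω | (n:ℝ) < X ω}).indicator g ω ∂P) atTop (𝓝 0) := by
      have := MeasureTheory.tendsto_integral_of_dominated_convergence (μ := P)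
        (F := fun n : ℕ => ({ω | (n:ℝ) < X ω}).indicator g) (f := fun _ => (0:ℝ)) (bound := g)
        (fun n => (hg.aestronglyMeasurable.indicator (hmeas _)))
        hg
        (fun n => Filter.Eventually.of_forall fun ω => by
          show ‖({ω | (n:ℝ) < X ω}).indicator g ω‖ ≤ g ω
          by_cases h : ω ∈ {ω | (n:ℝ) < X ω}
          · rw [Set.indicator_of_mem h, Real.norm_of_nonneg (hgpos ω)]
          · rw [Set.indicator_of_notMem h, norm_zero]; exact hgpos ω)
        (Filter.Eventually.of_forall fun ω => by
          have : ∀ᶠ n : ℕ in atTop, ({ω | (n:ℝ) < X ω}).indicator g ω = 0 := by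
            refine Filter.eventually_atTop.2 ⟨⌈X ω⌉₊, fun n hn => ?_⟩
            refine Set.indicator_of_notMem (fun h => ?_) _
            have : X ω ≤ (n:ℝ) := le_trans (Nat.le_ceil _) (by exact_mod_cast hn)
            exact absurd h (not_lt.2 this)
          exact (tendsto_const_nhds.congr' (this.mono fun n h => h.symm)))
      simpa using this
    refine h0.congr fun n => ?_
    rw [integral_indicator (hmeas _)]
  have : ∀ᶠ n : ℕ in atTop, T n < ε := by
    exact hten.eventually (eventually_lt_nhds hε)
  obtain ⟨N, hN⟩ := Filter.eventually_atTop.1 this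
  refine ⟨N, fun c hc => ?_⟩
  exact le_trans (hanti N c hc) (hN N le_rfl).le

set_option maxHeartbeats 1000000 in
lemma dev_bound (X : ℕ → Ω → ℝ) (hXm : ∀ i, Measurable (X i))
    (hind : iIndepFun X P)
    (hid : ∀ i, IdentDistrib (X i) (X 0) P P)
    (hX1 : ∀ i ω, 1 ≤ X i ω)
    (hmom : Integrable (fun ω => X 0 ω ^ (3/2:ℝ)) P)
    {δ ε : ℝ} (hδ : 0 < δ) (hε : 0 < ε) :
    ∀ᶠ k : ℕ in atTop,
      (P {ω | δ * k ≤ |(∑ i ∈ Finset.range k, X i ω) - (∫ ω, X 0 ω ∂P) * k|}).toReal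
        ≤ ε / Real.sqrt k := by
  classical
  set g : Ω → ℝ := fun ω => X 0 ω ^ (3/2:ℝ) with hgdef
  have hX0pos : ∀ ω, 0 < X 0 ω := fun ω => lt_of_lt_of_le one_pos (hX1 0 ω)
  have hgpos : ∀ ω, 0 ≤ g ω := fun ω => Real.rpow_nonneg (hX0pos ω).le _
  set G : ℝ := ∫ ω, g ω ∂P with hGdef
  have hG0 : 0 ≤ G := integral_nonneg hgpos
  set K : ℝ := G + 1 with hKdef
  have hK0 : 0 < K := by positivity
  have hGK : G ≤ K := by simp [hKdef]
  have hXint : Integrable (X 0) P := by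
    refine hmom.mono (hXm 0).aestronglyMeasurable ?_
    refine Filter.Eventually.of_forall fun ω => ?_
    rw [Real.norm_of_nonneg (hX0pos ω).le, Real.norm_of_nonneg (hgpos ω)]
    calc X 0 ω = X 0 ω ^ (1:ℝ) := (Real.rpow_one _).symm
    _ ≤ X 0 ω ^ (3/2:ℝ) := Real.rpow_le_rpow_of_exponent_le (hX1 0 ω) (by norm_num)
  set m : ℝ := ∫ ω, X 0 ω ∂P with hmdef
  have hm1 : 1 ≤ m := by
    have := integral_mono (integrable_const (1:ℝ)) hXint (fun ω => hX1 0 ω)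
    simpa using this
  set η : ℝ := min ((ε*δ^2/(8*K))^2) 1 with hηdef
  have hη0 : 0 < η := lt_min (by positivity) one_pos
  have hηroot : Real.sqrt η ≤ ε*δ^2/(8*K) := by
    calc Real.sqrt η ≤ Real.sqrt ((ε*δ^2/(8*K))^2) := Real.sqrt_le_sqrt (min_le_left _ _)
    _ = ε*δ^2/(8*K) := Real.sqrt_sq (by positivity)
  obtain ⟨c₁, hc₁⟩ := tail_small (P := P) hmom hgpos (hXm 0)
      (min (δ * Real.sqrt η / 2) ((ε/2) * η ^ (3/2:ℝ)))
      (lt_min (by positivity) (by positivity))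
  have hηk : Tendsto (fun k : ℕ => η * k) atTop atTop :=
    (tendsto_natCast_atTop_atTop (R := ℝ)).const_mul_atTop hη0
  filter_upwards [Filter.eventually_ge_atTop 1, hηk.eventually (Filter.eventually_ge_atTop 1),
    hηk.eventually (Filter.eventually_ge_atTop c₁)] with k hk1 hc1 hck
  set c : ℝ := η * k with hcdef
  have hc0 : 0 < c := lt_of_lt_of_le one_pos hc1
  have hk0 : (0:ℝ) < k := by exact_mod_cast hk1
  have hsk : 0 < Real.sqrt k := Real.sqrt_pos.2 hk0
  have hsk1 : 1 ≤ Real.sqrt k := by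
    rw [show (1:ℝ) = Real.sqrt 1 by simp]
    exact Real.sqrt_le_sqrt (by exact_mod_cast hk1)
  -- the tail integral
  set Tr : ℝ := ∫ ω in {ω | c < X 0 ω}, g ω ∂P with hTrdef
  have hTrle := hc₁ c hck
  have hTr0 : 0 ≤ Tr := setIntegral_nonneg (measurableSet_lt measurable_const (hXm 0))
    (fun ω _ => hgpos ω)
  -- truncated variables
  set Y : ℕ → Ω → ℝ := fun i ω => min (X i ω) c with hYdef
  have hYm : ∀ i, Measurable (Y i) := fun i => (hXm i).min measurable_const
  have hY1 : ∀ i ω, 1 ≤ Y i ω := fun i ω => le_min (hX1 i ω) hc1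
  have hYleX : ∀ i ω, Y i ω ≤ X i ω := fun i ω => min_le_left _ _
  have hYlec : ∀ i ω, Y i ω ≤ c := fun i ω => min_le_right _ _
  have hYid : ∀ i, IdentDistrib (Y i) (Y 0) P P := fun i =>
    (hid i).comp (measurable_id.min measurable_const)
  have hYL2 : ∀ i, MemLp (Y i) 2 P := by
    intro i
    refine MemLp.of_bound (hYm i).aestronglyMeasurable c
      (Filter.Eventually.of_forall fun ω => ?_)
    rw [Real.norm_of_nonneg (le_trans zero_le_one (hY1 i ω))]
    exact hYlec i ω
  have hYint : ∀ i, Integrable (Y i) P := fun i => (hYL2 i).integrable one_le_two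
  set W : Ω → ℝ := ∑ i ∈ Finset.range k, Y i with hWdef
  have hWapp : ∀ ω, W ω = ∑ i ∈ Finset.range k, Y i ω := fun ω => Finset.sum_apply _ _ _
  have hWL2 : MemLp W 2 P := memLp_finset_sum' _ (fun i _ => hYL2 i)
  have hEW : ∫ ω, W ω ∂P = k * ∫ ω, Y 0 ω ∂P := by
    calc ∫ ω, W ω ∂P = ∫ ω, ∑ i ∈ Finset.range k, Y i ω ∂P := by simp only [hWapp]
    _ = ∑ i ∈ Finset.range k, ∫ ω, Y i ω ∂P := integral_finset_sum _ (fun i _ => hYint i)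
    _ = k * ∫ ω, Y 0 ω ∂P := by
        rw [Finset.sum_congr rfl (fun i _ => (hYid i).integral_eq), Finset.sum_const,
          Finset.card_range, nsmul_eq_mul]
  -- mean shift bound
  have hdiff_eq : m - ∫ ω, Y 0 ω ∂P = ∫ ω, (X 0 ω - Y 0 ω) ∂P := by
    rw [integral_sub hXint (hYint 0)]
  have hdiff_nonneg : 0 ≤ ∫ ω, (X 0 ω - Y 0 ω) ∂P :=
    integral_nonneg fun ω => sub_nonneg.2 (hYleX 0 ω)
  have hdiff_le : ∫ ω, (X 0 ω - Y 0 ω) ∂P ≤ Tr / Real.sqrt c := by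
    have hbnd : ∀ ω, X 0 ω - Y 0 ω ≤
        ({ω | c < X 0 ω}).indicator (fun ω => g ω / Real.sqrt c) ω := by
      intro ω
      by_cases h : ω ∈ {ω | c < X 0 ω}
      · rw [Set.indicator_of_mem h]
        have hcX : c < X 0 ω := h
        have h1 : X 0 ω - Y 0 ω ≤ X 0 ω := by
          have := hY1 0 ω; simp only [hYdef]; nlinarith [hY1 0 ω]
        refine le_trans h1 ?_
        rw [le_div_iff₀ (Real.sqrt_pos.2 hc0)]
        calc X 0 ω * Real.sqrt c ≤ X 0 ω * Real.sqrt (X 0 ω) := by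
              have := Real.sqrt_le_sqrt hcX.le
              nlinarith [hX0pos ω]
        _ = X 0 ω ^ (1:ℝ) * (X 0 ω) ^ (1/2:ℝ) := by
              rw [Real.rpow_one, Real.sqrt_eq_rpow]
        _ = g ω := by
              rw [← Real.rpow_add (hX0pos ω), hgdef]; norm_num
      · rw [Set.indicator_of_notMem h]
        have : X 0 ω ≤ c := not_lt.1 h
        simp only [hYdef, min_eq_left this, sub_self, le_refl]
    have hint2 : Integrable (({ω | c < X 0 ω}).indicator (fun ω => g ω / Real.sqrt c)) P :=
      (hmom.div_const _).indicator (measurableSet_lt measurable_const (hXm 0))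
    calc ∫ ω, (X 0 ω - Y 0 ω) ∂P
        ≤ ∫ ω, ({ω | c < X 0 ω}).indicator (fun ω => g ω / Real.sqrt c) ω ∂P :=
          integral_mono (hXint.sub (hYint 0)) hint2 hbnd
    _ = ∫ ω in {ω | c < X 0 ω}, g ω / Real.sqrt c ∂P :=
          integral_indicator (measurableSet_lt measurable_const (hXm 0))
    _ = Tr / Real.sqrt c := by rw [integral_div]
  have hsqrtc : Real.sqrt c = Real.sqrt η * Real.sqrt k := Real.sqrt_mul hη0.le _
  have hshift : (k:ℝ) * |(∫ ω, Y 0 ω ∂P) - m| ≤ δ * k / 2 := by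
    have habs : |(∫ ω, Y 0 ω ∂P) - m| = m - ∫ ω, Y 0 ω ∂P := by
      rw [abs_sub_comm, abs_of_nonneg (by rw [hdiff_eq]; exact hdiff_nonneg)]
    rw [habs, hdiff_eq]
    have h1 : ∫ ω, (X 0 ω - Y 0 ω) ∂P ≤ δ / (2 * Real.sqrt k) := by
      refine le_trans hdiff_le ?_
      rw [hsqrtc]
      have h2 : Tr ≤ δ * Real.sqrt η / 2 := le_trans hTrle (min_le_left _ _)
      have hsη : 0 < Real.sqrt η := Real.sqrt_pos.2 hη0
      calc Tr / (Real.sqrt η * Real.sqrt k) ≤ (δ * Real.sqrt η / 2) / (Real.sqrt η * Real.sqrt k) := by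
            gcongr
      _ = δ / (2 * Real.sqrt k) := by
            field_simp
    calc (k:ℝ) * ∫ ω, (X 0 ω - Y 0 ω) ∂P ≤ (k:ℝ) * (δ / (2 * Real.sqrt k)) := by
          exact mul_le_mul_of_nonneg_left h1 hk0.le
    _ = δ * ((k:ℝ) / Real.sqrt k) / 2 := by ring
    _ = δ * Real.sqrt k / 2 := by rw [Real.div_sqrt]
    _ ≤ δ * k / 2 := by
          have hsq : Real.sqrt k ≤ (k:ℝ) := by
            nlinarith [mul_le_mul_of_nonneg_left hsk1 (Real.sqrt_nonneg (k:ℝ)),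
              Real.mul_self_sqrt hk0.le]
          gcongr
  -- variance bound
  have hVarsum : variance W P = k * variance (Y 0) P := by
    rw [hWdef, IndepFun.variance_sum (fun i _ => hYL2 i) ?_]
    · rw [Finset.sum_congr rfl (fun i _ => (hYid i).variance_eq), Finset.sum_const,
        Finset.card_range, nsmul_eq_mul]
    · intro i _ j _ hij
      exact (hind.comp (fun _ x => min x c) (fun _ => measurable_id.min measurable_const)).indepFun hij
  have hVarY : variance (Y 0) P ≤ Real.sqrt c * G := by
    refine le_trans (variance_le_expectation_sq (hYm 0).aestronglyMeasurable) ?_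
    have hb : ∀ ω, (Y 0 ω) ^ 2 ≤ Real.sqrt c * g ω := by
      intro ω
      have hY0 : 0 < Y 0 ω := lt_of_lt_of_le one_pos (hY1 0 ω)
      calc (Y 0 ω) ^ 2 = Y 0 ω ^ ((2:ℕ):ℝ) := (Real.rpow_natCast _ 2).symm
      _ = Y 0 ω ^ (1/2:ℝ) * Y 0 ω ^ (3/2:ℝ) := by
            rw [← Real.rpow_add hY0]; norm_num
      _ ≤ c ^ (1/2:ℝ) * X 0 ω ^ (3/2:ℝ) := by
            refine mul_le_mul (Real.rpow_le_rpow hY0.le (hYlec 0 ω) (by norm_num))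
              (Real.rpow_le_rpow hY0.le (hYleX 0 ω) (by norm_num))
              (Real.rpow_nonneg hY0.le _) (Real.rpow_nonneg hc0.le _)
      _ = Real.sqrt c * g ω := by rw [Real.sqrt_eq_rpow]
    have hpow : (Y 0 ^ 2 : Ω → ℝ) = fun ω => (Y 0 ω)^2 := rfl
    calc ∫ ω, (Y 0 ^ 2 : Ω → ℝ) ω ∂P ≤ ∫ ω, Real.sqrt c * g ω ∂P := by
          rw [hpow]
          refine integral_mono ((hYL2 0).integrable_sq) (hmom.const_mul _) ?_
          intro ω; exact hb ω
    _ = Real.sqrt c * G := by rw [integral_const_mul]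
  -- Chebyshev
  have hcheb := meas_ge_le_variance_div_sq (μ := P) hWL2 (c := δ * k / 2) (by positivity)
  -- event decomposition
  set A : Set Ω := {ω | δ * k ≤ |(∑ i ∈ Finset.range k, X i ω) - m * k|} with hAdef
  set U : Set Ω := ⋃ i ∈ Finset.range k, {ω | c < X i ω} with hUdef
  set C : Set Ω := {ω | δ * k / 2 ≤ |W ω - ∫ ω, W ω ∂P|} with hCdef
  have hsub : A ⊆ U ∪ C := by
    intro ω hA
    by_cases hU : ω ∈ U
    · exact Or.inl hU
    · refine Or.inr ?_
      have hXc : ∀ i ∈ Finset.range k, X i ω ≤ c := by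
        intro i hi
        by_contra hlt
        exact hU (Set.mem_biUnion hi (not_le.1 hlt))
      have hWS : W ω = ∑ i ∈ Finset.range k, X i ω := by
        rw [hWapp]
        exact Finset.sum_congr rfl fun i hi => min_eq_left (hXc i hi)
      have h1 : δ * k ≤ |W ω - m * k| := by rw [hWS]; exact hA
      have h2 : |(∫ ω, W ω ∂P) - m * k| ≤ δ * k / 2 := by
        rw [hEW, show (k:ℝ) * (∫ ω, Y 0 ω ∂P) - m * k = k * ((∫ ω, Y 0 ω ∂P) - m) by ring,
          abs_mul, abs_of_nonneg hk0.le]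
        exact hshift
      have := abs_add_le (W ω - ∫ ω, W ω ∂P) ((∫ ω, W ω ∂P) - m * k)
      simp only [sub_add_sub_cancel] at this
      show δ * k / 2 ≤ |W ω - ∫ ω, W ω ∂P|
      linarith
  -- measure bounds
  have hPU : (P U).toReal ≤ k * (P {ω | c < X 0 ω}).toReal := by
    have h1 : P U ≤ ∑ i ∈ Finset.range k, P {ω | c < X i ω} := measure_biUnion_finset_le _ _
    have h2 : ∀ i, P {ω | c < X i ω} = P {ω | c < X 0 ω} := by
      intro i
      exact (hid i).measure_mem_eq (s := Set.Ioi c) measurableSet_Ioi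
    calc (P U).toReal ≤ (∑ i ∈ Finset.range k, P {ω | c < X i ω}).toReal :=
          ENNReal.toReal_mono (by
            refine (ENNReal.sum_lt_top.2 fun i _ => measure_lt_top P _).ne) h1
    _ = ∑ i ∈ Finset.range k, (P {ω | c < X i ω}).toReal :=
          ENNReal.toReal_sum fun i _ => (measure_lt_top P _).ne
    _ = k * (P {ω | c < X 0 ω}).toReal := by
          rw [Finset.sum_congr rfl fun i _ => by rw [h2 i], Finset.sum_const,
            Finset.card_range, nsmul_eq_mul]
  have hMarkov : (P {ω | c < X 0 ω}).toReal ≤ Tr / c ^ (3/2:ℝ) := by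
    rw [le_div_iff₀ (Real.rpow_pos_of_pos hc0 _)]
    have hmeasset : MeasurableSet {ω | c < X 0 ω} := measurableSet_lt measurable_const (hXm 0)
    calc (P {ω | c < X 0 ω}).toReal * c ^ (3/2:ℝ)
        = ∫ _ω in {ω | c < X 0 ω}, c ^ (3/2:ℝ) ∂P := by rw [setIntegral_const, smul_eq_mul]; rfl
    _ ≤ ∫ ω in {ω | c < X 0 ω}, g ω ∂P := by
          refine setIntegral_mono_on (integrableOn_const (measure_lt_top P _).ne)
            hmom.integrableOn hmeasset ?_
          intro ω hω
          exact Real.rpow_le_rpow hc0.le (le_of_lt hω) (by norm_num)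
    _ = Tr := rfl
  have hPC : (P C).toReal ≤ variance W P / (δ * k / 2)^2 := by
    refine le_trans (ENNReal.toReal_mono ENNReal.ofReal_ne_top hcheb) ?_
    rw [ENNReal.toReal_ofReal (div_nonneg (variance_nonneg _ _) (sq_nonneg _))]
  -- combine
  have hmain : (P A).toReal ≤ k * (Tr / c ^ (3/2:ℝ)) + (k * (Real.sqrt c * G)) / (δ * k / 2)^2 := by
    have h1 : P A ≤ P U + P C := le_trans (measure_mono hsub) (measure_union_le _ _)
    calc (P A).toReal ≤ (P U + P C).toReal := ENNReal.toReal_mono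
          (ENNReal.add_ne_top.2 ⟨(measure_lt_top P _).ne, (measure_lt_top P _).ne⟩) h1
    _ = (P U).toReal + (P C).toReal := ENNReal.toReal_add (measure_lt_top P _).ne (measure_lt_top P _).ne
    _ ≤ k * (Tr / c ^ (3/2:ℝ)) + variance W P / (δ * k / 2)^2 := by
          refine add_le_add (le_trans hPU ?_) hPC
          exact mul_le_mul_of_nonneg_left hMarkov hk0.le
    _ ≤ _ := by
          refine add_le_add (le_refl _) ?_
          rw [hVarsum]
          gcongr
  -- turn into ε / sqrt k
  have hterm1 : (k:ℝ) * (Tr / c ^ (3/2:ℝ)) ≤ ε / (2 * Real.sqrt k) := by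
    have hTr2 : Tr ≤ (ε/2) * η ^ (3/2:ℝ) := le_trans hTrle (min_le_right _ _)
    have hcpow : c ^ (3/2:ℝ) = η ^ (3/2:ℝ) * ((k:ℝ) * Real.sqrt k) := by
      rw [hcdef, Real.mul_rpow hη0.le hk0.le]
      congr 1
      rw [show (3/2:ℝ) = 1 + 1/2 by norm_num, Real.rpow_add hk0, Real.rpow_one,
        ← Real.sqrt_eq_rpow]
    have hηp : 0 < η ^ (3/2:ℝ) := Real.rpow_pos_of_pos hη0 _
    have heq : (k:ℝ) * (Tr / (η ^ (3/2:ℝ) * ((k:ℝ) * Real.sqrt k)))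
        = (Tr / η ^ (3/2:ℝ)) * (1 / Real.sqrt k) := by
      field_simp
    rw [hcpow, heq]
    have h9 : Tr / η ^ (3/2:ℝ) ≤ ε / 2 := by
      rw [div_le_iff₀ hηp]; exact hTr2
    calc (Tr / η ^ (3/2:ℝ)) * (1 / Real.sqrt k) ≤ (ε/2) * (1 / Real.sqrt k) := by
          gcongr
    _ = ε / (2 * Real.sqrt k) := by ring
  have hterm2 : ((k:ℝ) * (Real.sqrt c * G)) / (δ * k / 2)^2 ≤ ε / (2 * Real.sqrt k) := by
    rw [hsqrtc]
    have hks : (k:ℝ) = Real.sqrt k * Real.sqrt k := (Real.mul_self_sqrt hk0.le).symm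
    have h8 : 4 * Real.sqrt η * G / δ^2 ≤ ε / 2 := by
      have h81 : 4 * Real.sqrt η * G / δ^2 ≤ 4 * (ε*δ^2/(8*K)) * G / δ^2 := by
        gcongr
      have h82 : 4 * (ε*δ^2/(8*K)) * G / δ^2 = ε * G / (2*K) := by
        field_simp; ring
      have h83 : ε * G / (2*K) ≤ ε * K / (2*K) := by gcongr
      have h84 : ε * K / (2*K) = ε/2 := by field_simp
      linarith
    have heq : ((k:ℝ) * (Real.sqrt η * Real.sqrt k * G)) / (δ * (k:ℝ) / 2)^2
        = (4 * Real.sqrt η * G / δ^2) * (Real.sqrt k / (k:ℝ)) := by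
      field_simp
      ring
    rw [heq, Real.sqrt_div_self']
    calc (4 * Real.sqrt η * G / δ^2) * (1 / Real.sqrt k) ≤ (ε/2) * (1/Real.sqrt k) := by
          gcongr
    _ = ε / (2 * Real.sqrt k) := by ring
  calc (P A).toReal ≤ k * (Tr / c ^ (3/2:ℝ)) + (k * (Real.sqrt c * G)) / (δ * k / 2)^2 := hmain
  _ ≤ ε / (2 * Real.sqrt k) + ε / (2 * Real.sqrt k) := add_le_add hterm1 hterm2
  _ = ε / Real.sqrt k := by field_simp; ring


lemma toReal_le_add' {A B C : Set Ω} (P : Measure Ω) [IsFiniteMeasure P] (h : A ⊆ B ∪ C) :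
    (P A).toReal ≤ (P B).toReal + (P C).toReal := by
  rw [← ENNReal.toReal_add (measure_ne_top P B) (measure_ne_top P C)]
  exact ENNReal.toReal_mono (ENNReal.add_ne_top.2 ⟨measure_ne_top P B, measure_ne_top P C⟩)
    (le_trans (measure_mono h) (measure_union_le _ _))

lemma toReal_mono' {A B : Set Ω} (P : Measure Ω) [IsFiniteMeasure P] (h : A ⊆ B) :
    (P A).toReal ≤ (P B).toReal :=
  ENNReal.toReal_mono (measure_ne_top P B) (measure_mono h)

lemma sqrt_ratio_lim {κ : ℕ → ℕ} {c : ℝ} (hc : 0 < c)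
    (h1 : ∀ n : ℕ, (n:ℝ)/c - 1 ≤ κ n) (h2 : ∀ n : ℕ, (κ n : ℝ) ≤ (n:ℝ)/c + 1) :
    Tendsto κ atTop atTop ∧
      Tendsto (fun n : ℕ => Real.sqrt n / Real.sqrt (κ n)) atTop (𝓝 (Real.sqrt c)) := by
  have htop : Tendsto κ atTop atTop := by
    rw [tendsto_atTop]
    intro b
    have hcast : Tendsto (fun n : ℕ => (n:ℝ)) atTop atTop := tendsto_natCast_atTop_atTop
    filter_upwards [hcast.eventually (Filter.eventually_ge_atTop (c*(b+1)))] with n hn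
    have : (b:ℝ) ≤ (κ n : ℝ) := by
      have h3 : (b:ℝ) ≤ (n:ℝ)/c - 1 := by
        rw [le_sub_iff_add_le, le_div_iff₀ hc]
        linarith [hn]
      linarith [h1 n]
    exact_mod_cast this
  have hratio : Tendsto (fun n : ℕ => (κ n : ℝ)/(n:ℝ)) atTop (𝓝 (1/c)) := by
    have hlow : Tendsto (fun n : ℕ => 1/c - 1/(n:ℝ)) atTop (𝓝 (1/c)) := by
      have : Tendsto (fun n : ℕ => 1/(n:ℝ)) atTop (𝓝 0) := tendsto_one_div_atTop_nhds_zero_nat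
      simpa using tendsto_const_nhds.sub this
    have hhigh : Tendsto (fun n : ℕ => 1/c + 1/(n:ℝ)) atTop (𝓝 (1/c)) := by
      have : Tendsto (fun n : ℕ => 1/(n:ℝ)) atTop (𝓝 0) := tendsto_one_div_atTop_nhds_zero_nat
      simpa using tendsto_const_nhds.add this
    refine tendsto_of_tendsto_of_tendsto_of_le_of_le' hlow hhigh ?_ ?_
    · filter_upwards [Filter.eventually_ge_atTop 1] with n hn
      have hn0 : (0:ℝ) < n := by exact_mod_cast hn
      have : ((n:ℝ)/c - 1)/(n:ℝ) ≤ (κ n : ℝ)/(n:ℝ) := by gcongr; exact h1 n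
      calc 1/c - 1/(n:ℝ) = ((n:ℝ)/c - 1)/(n:ℝ) := by field_simp
      _ ≤ (κ n : ℝ)/(n:ℝ) := this
    · filter_upwards [Filter.eventually_ge_atTop 1] with n hn
      have hn0 : (0:ℝ) < n := by exact_mod_cast hn
      have : (κ n : ℝ)/(n:ℝ) ≤ ((n:ℝ)/c + 1)/(n:ℝ) := by gcongr; exact h2 n
      calc (κ n : ℝ)/(n:ℝ) ≤ ((n:ℝ)/c + 1)/(n:ℝ) := this
      _ = 1/c + 1/(n:ℝ) := by field_simp
  have hinv : Tendsto (fun n : ℕ => (n:ℝ)/(κ n : ℝ)) atTop (𝓝 c) := by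
    have h0 : (1/c) ≠ 0 := by positivity
    have := hratio.inv₀ h0
    rw [one_div, inv_inv] at this
    exact this.congr fun n => inv_div _ _
  refine ⟨htop, ?_⟩
  have := (Real.continuous_sqrt.tendsto c).comp hinv
  refine this.congr fun n => ?_
  simp only [Function.comp]
  rw [Real.sqrt_div (Nat.cast_nonneg n)]

lemma comp_q_lim {q : ℕ → ℝ} {CE : ℝ}
    (hq : Tendsto (fun k : ℕ => Real.sqrt k * q k) atTop (𝓝 CE))
    {κ : ℕ → ℕ} (hκ : Tendsto κ atTop atTop)
    {c : ℝ} (hr : Tendsto (fun n : ℕ => Real.sqrt n / Real.sqrt (κ n)) atTop (𝓝 (Real.sqrt c))) :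
    Tendsto (fun n : ℕ => Real.sqrt n * q (κ n)) atTop (𝓝 (Real.sqrt c * CE)) := by
  have h1 : Tendsto (fun n : ℕ => Real.sqrt (κ n) * q (κ n)) atTop (𝓝 CE) := hq.comp hκ
  refine (hr.mul h1).congr' ?_
  filter_upwards [hκ.eventually (Filter.eventually_ge_atTop 1)] with n hn
  have hpos : (0:ℝ) < Real.sqrt (κ n) := Real.sqrt_pos.2 (by exact_mod_cast hn)
  field_simp

lemma dev_term_lim {Dev : ℕ → ℝ} (hDev0 : ∀ k, 0 ≤ Dev k)
    (hDev : ∀ ε, 0 < ε → ∀ᶠ k : ℕ in atTop, Dev k ≤ ε / Real.sqrt k)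
    {κ : ℕ → ℕ} (hκ : Tendsto κ atTop atTop)
    {c : ℝ} (hr : Tendsto (fun n : ℕ => Real.sqrt n / Real.sqrt (κ n)) atTop (𝓝 (Real.sqrt c))) :
    Tendsto (fun n : ℕ => Real.sqrt n * Dev (κ n)) atTop (𝓝 0) := by
  refine Metric.tendsto_nhds.2 fun ρ hρ => ?_
  set B : ℝ := Real.sqrt c + 1 with hBdef
  have hB0 : 0 < B := by positivity
  have hε : 0 < ρ/(2*B) := by positivity
  filter_upwards [hr.eventually (eventually_le_nhds (lt_add_one _)),
    hκ.eventually (hDev _ hε), hκ.eventually (Filter.eventually_ge_atTop 1)] with n hn1 hn2 hn3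
  have hκpos : (0:ℝ) < Real.sqrt (κ n) := Real.sqrt_pos.2 (by exact_mod_cast hn3)
  have hb : Real.sqrt n * Dev (κ n) ≤ (ρ/(2*B)) * B := by
    calc Real.sqrt n * Dev (κ n) ≤ Real.sqrt n * ((ρ/(2*B)) / Real.sqrt (κ n)) :=
          mul_le_mul_of_nonneg_left hn2 (Real.sqrt_nonneg _)
    _ = (ρ/(2*B)) * (Real.sqrt n / Real.sqrt (κ n)) := by ring
    _ ≤ (ρ/(2*B)) * B := mul_le_mul_of_nonneg_left hn1 hε.le
  have heq : (ρ/(2*B)) * B = ρ/2 := by field_simp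
  rw [Real.dist_eq, sub_zero, abs_of_nonneg (mul_nonneg (Real.sqrt_nonneg _) (hDev0 _))]
  rw [heq] at hb
  linarith

lemma sqrt_add_le' {x y : ℝ} (hx : 0 ≤ x) (hy : 0 ≤ y) :
    Real.sqrt (x + y) ≤ Real.sqrt x + Real.sqrt y := by
  have h1 : x + y ≤ (Real.sqrt x + Real.sqrt y)^2 := by
    nlinarith [Real.sq_sqrt hx, Real.sq_sqrt hy, Real.sqrt_nonneg x, Real.sqrt_nonneg y]
  calc Real.sqrt (x + y) ≤ Real.sqrt ((Real.sqrt x + Real.sqrt y)^2) := Real.sqrt_le_sqrt h1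
  _ = Real.sqrt x + Real.sqrt y := Real.sqrt_sq (by positivity)

end Helpers

section ModelFacts
variable {Ω : Type*} [MeasurableSpace Ω] {P : Measure Ω}

lemma Z_zero_mono (M : Model Ω P) {a b : ℕ} (h : a ≤ b) (ω : Ω) (ha : M.Z a ω = 0) :
    M.Z b ω = 0 := by
  induction b, h using Nat.le_induction with
  | base => exact ha
  | succ n hn ih => rw [M.Z_rec n ω, ih]; simp

lemma surv_mono (M : Model Ω P) {a b : ℕ} (h : a ≤ b) (ω : Ω) (hb : 0 < M.Z b ω) :
    0 < M.Z a ω := by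
  by_contra h0
  push_neg at h0
  have : M.Z a ω = 0 := Nat.le_zero.1 h0
  rw [Z_zero_mono M h ω this] at hb
  exact lt_irrefl 0 hb

lemma S_mono (M : Model Ω P) (ω : Ω) {k l : ℕ} (h : k ≤ l) : S M k ω ≤ S M l ω :=
  Finset.sum_le_sum_of_subset (Finset.range_subset_range.2 h)

lemma le_S (M : Model Ω P) (k : ℕ) (ω : Ω) : k ≤ S M k ω := by
  calc k = ∑ _i ∈ Finset.range k, 1 := by simp
  _ ≤ S M k ω := Finset.sum_le_sum fun i _ => M.d_pos i ω

lemma theta_mem (M : Model Ω P) (n : ℕ) (ω : Ω) : n < S M (theta M n ω) ω :=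
  Nat.sInf_mem (⟨n+1, lt_of_lt_of_le (by omega : n < n+1) (le_S M (n+1) ω)⟩ :
    {k | n < S M k ω}.Nonempty)

lemma theta_le_iff (M : Model Ω P) {n k : ℕ} {ω : Ω} : theta M n ω ≤ k ↔ n < S M k ω := by
  constructor
  · intro h
    exact lt_of_lt_of_le (theta_mem M n ω) (S_mono M ω h)
  · exact fun h => Nat.sInf_le h

lemma theta_pos (M : Model Ω P) (n : ℕ) (ω : Ω) : 1 ≤ theta M n ω := by
  by_contra h
  push_neg at h
  have h0 : theta M n ω ≤ 0 := by omega
  have := (theta_le_iff M).mp h0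
  simp [S] at this

-- upper inclusion for the `theta - 1` process
lemma incl_ub_b (M : Model Ω P) (n k : ℕ) :
    {ω | 0 < M.Z (S M (theta M n ω - 1) ω) ω} ⊆
      {ω | 0 < M.Z (S M k ω) ω} ∪ {ω | n < S M k ω} := by
  intro ω h
  by_cases hk : n < S M k ω
  · exact Or.inr hk
  · refine Or.inl ?_
    have hθ : ¬ theta M n ω ≤ k := fun hc => hk (theta_le_iff M |>.1 hc)
    have hk' : k ≤ theta M n ω - 1 := by omega
    exact surv_mono M (S_mono M ω hk') ω h

lemma incl_ub_a (M : Model Ω P) (n k : ℕ) :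
    {ω | 0 < M.Z (S M (theta M n ω) ω) ω} ⊆
      {ω | 0 < M.Z (S M k ω) ω} ∪ {ω | n < S M k ω} := by
  intro ω h
  by_cases hk : n < S M k ω
  · exact Or.inr hk
  · refine Or.inl ?_
    have hθ : ¬ theta M n ω ≤ k := fun hc => hk (theta_le_iff M |>.1 hc)
    have hk' : k ≤ theta M n ω := by omega
    exact surv_mono M (S_mono M ω hk') ω h

lemma incl_lb_a (M : Model Ω P) (n k : ℕ) :
    {ω | 0 < M.Z (S M k ω) ω} ⊆
      {ω | 0 < M.Z (S M (theta M n ω) ω) ω} ∪ {ω | S M k ω ≤ n} := by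
  intro ω h
  by_cases hk : n < S M k ω
  · refine Or.inl ?_
    have hθ : theta M n ω ≤ k := theta_le_iff M |>.2 hk
    exact surv_mono M (S_mono M ω hθ) ω h
  · exact Or.inr (not_lt.1 hk)

lemma incl_lb_b (M : Model Ω P) (n k : ℕ) :
    {ω | 0 < M.Z (S M k ω) ω} ⊆
      {ω | 0 < M.Z (S M (theta M n ω - 1) ω) ω} ∪ {ω | S M k ω ≤ n} := by
  intro ω h
  by_cases hk : n < S M k ω
  · refine Or.inl ?_
    have hθ : theta M n ω ≤ k := theta_le_iff M |>.2 hk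
    have hθ' : theta M n ω - 1 ≤ k := by omega
    exact surv_mono M (S_mono M ω hθ') ω h
  · exact Or.inr (not_lt.1 hk)

lemma incl_a_p (M : Model Ω P) (n : ℕ) :
    {ω | 0 < M.Z (S M (theta M n ω) ω) ω} ⊆ {ω | 0 < M.Z n ω} := by
  intro ω h
  exact surv_mono M (le_of_lt (theta_mem M n ω)) ω h

lemma incl_p_b (M : Model Ω P) (n : ℕ) :
    {ω | 0 < M.Z n ω} ⊆ {ω | 0 < M.Z (S M (theta M n ω - 1) ω) ω} := by
  intro ω h
  have h1 : ¬ theta M n ω ≤ theta M n ω - 1 := by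
    have := theta_pos M n ω; omega
  have h2 : ¬ n < S M (theta M n ω - 1) ω := fun hc => h1 (theta_le_iff M |>.2 hc)
  exact surv_mono M (not_lt.1 h2) ω h

end ModelFacts

/-- Under (A1)–(A4), with `ϑ(n) = inf{k ≥ 0 : S_k > n}` and `C_Embed > 0` the
constant with `√n P{Z_{S_n} > 0} → C_Embed`, both
`P{Z_{S_{ϑ(n)}} > 0} ~ m^{1/2} C_Embed/√n` and `P{Z_{S_{ϑ(n)-1}} > 0} ~ m^{1/2} C_Embed/√n`;
consequently `C_Sparse = m^{1/2} C_Embed`. -/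
theorem stopped_embedded_asymptotics (Ω : Type*) [MeasurableSpace Ω] [StandardBorelSpace Ω]
    (P : Measure Ω) [IsProbabilityMeasure P] (M : Model Ω P) (hM : CondLaw M)
    (h1 : A1 M) (h2 : A2 M) (h3 : A3 M) (h4 : A4 M)
    (CEmbed CSparse : ℝ) (hCE : 0 < CEmbed)
    (hE : Tendsto (fun n : ℕ => Real.sqrt n * (P {ω | 0 < M.Z (S M n ω) ω}).toReal)
      atTop (𝓝 CEmbed))
    (hS : Tendsto (fun n : ℕ => Real.sqrt n * (P {ω | 0 < M.Z n ω}).toReal)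
      atTop (𝓝 CSparse)) :
    Tendsto (fun n : ℕ => Real.sqrt n * (P {ω | 0 < M.Z (S M (theta M n ω) ω) ω}).toReal)
        atTop (𝓝 (Real.sqrt (mExp M) * CEmbed)) ∧
    Tendsto (fun n : ℕ => Real.sqrt n * (P {ω | 0 < M.Z (S M (theta M n ω - 1) ω) ω}).toReal)
        atTop (𝓝 (Real.sqrt (mExp M) * CEmbed)) ∧
    CSparse = Real.sqrt (mExp M) * CEmbed := by
  classical
  -- the i.i.d. real-valued increments
  set X : ℕ → Ω → ℝ := fun i ω => (M.d i ω : ℝ) with hXdef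
  have hXm : ∀ i, Measurable (X i) := fun i => measurable_from_top.comp (M.meas_d i)
  have hφm : Measurable (fun p : ℕ × (ℕ → ℝ≥0∞) => ((p.1 : ℕ) : ℝ)) :=
    measurable_from_top.comp measurable_fst
  have hind : iIndepFun X P := by
    have := M.env_indep.comp (fun _ => (fun p : ℕ × (ℕ → ℝ≥0∞) => ((p.1 : ℕ) : ℝ)))
      (fun _ => hφm)
    exact this
  have hid : ∀ i, IdentDistrib (X i) (X 0) P P := fun i => (M.env_ident i).comp hφm
  have hX1 : ∀ i ω, 1 ≤ X i ω := fun i ω => by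
    show (1:ℝ) ≤ ((M.d i ω : ℕ) : ℝ)
    exact_mod_cast M.d_pos i ω
  have hmom : Integrable (fun ω => X 0 ω ^ (3/2:ℝ)) P := by
    refine ⟨((hXm 0).pow_const _).aestronglyMeasurable, ?_⟩
    rw [hasFiniteIntegral_iff_ofReal (Filter.Eventually.of_forall fun ω =>
      Real.rpow_nonneg (Nat.cast_nonneg _) _)]
    have heq : ∀ ω, ENNReal.ofReal (X 0 ω ^ (3/2:ℝ)) = (M.d 0 ω : ℝ≥0∞) ^ (3/2:ℝ) := by
      intro ω
      rw [← ENNReal.ofReal_rpow_of_nonneg (Nat.cast_nonneg _) (by norm_num)]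
      congr 1
      exact ENNReal.ofReal_natCast _
    exact lt_of_eq_of_lt (lintegral_congr fun ω => heq ω) h3
  have hXint : Integrable (X 0) P := by
    refine hmom.mono (hXm 0).aestronglyMeasurable (Filter.Eventually.of_forall fun ω => ?_)
    have h0 : (0:ℝ) < X 0 ω := lt_of_lt_of_le one_pos (hX1 0 ω)
    rw [Real.norm_of_nonneg h0.le, Real.norm_of_nonneg (Real.rpow_nonneg h0.le _)]
    calc X 0 ω = X 0 ω ^ (1:ℝ) := (Real.rpow_one _).symm
    _ ≤ X 0 ω ^ (3/2:ℝ) := Real.rpow_le_rpow_of_exponent_le (hX1 0 ω) (by norm_num)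
  set m : ℝ := ∫ ω, X 0 ω ∂P with hmdef
  have hmExp : mExp M = m := rfl
  have hm1 : (1:ℝ) ≤ m := by
    have := integral_mono (integrable_const (1:ℝ)) hXint (fun ω => hX1 0 ω)
    simpa using this
  have hm0 : (0:ℝ) < m := lt_of_lt_of_le one_pos hm1
  have hcastS : ∀ k (ω : Ω), ((S M k ω : ℕ) : ℝ) = ∑ i ∈ Finset.range k, X i ω := by
    intro k ω
    simp only [S, Nat.cast_sum]; rfl
  have hDevAll : ∀ δ : ℝ, 0 < δ → ∀ ε : ℝ, 0 < ε → ∀ᶠ k : ℕ in atTop,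
      (P {ω | δ * k ≤ |(∑ i ∈ Finset.range k, X i ω) - m * k|}).toReal ≤ ε / Real.sqrt k :=
    fun δ hδ ε hε => dev_bound X hXm hind hid hX1 hmom hδ hε
  set q : ℕ → ℝ := fun k => (P {ω | 0 < M.Z (S M k ω) ω}).toReal with hqdef
  -- the main squeezing argument
  have key : ∀ c : ℕ → ℝ,
      (∀ n k, q k ≤ c n + (P {ω | S M k ω ≤ n}).toReal) →
      (∀ n k, c n ≤ q k + (P {ω | n < S M k ω}).toReal) →
      Tendsto (fun n : ℕ => Real.sqrt n * c n) atTop (𝓝 (Real.sqrt m * CEmbed)) := by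
    intro c hlow hup
    refine Metric.tendsto_nhds.2 fun ρ hρ => ?_
    set δ : ℝ := min (1/2) ((ρ/(2*(CEmbed+1)))^2) with hδdef
    have hδ0 : 0 < δ := lt_min (by norm_num) (by positivity)
    have hδh : δ ≤ 1/2 := min_le_left _ _
    have hδm : δ < m := lt_of_le_of_lt hδh (by linarith)
    have hsδ : Real.sqrt δ * CEmbed ≤ ρ/2 := by
      have h1 : Real.sqrt δ ≤ ρ/(2*(CEmbed+1)) := by
        calc Real.sqrt δ ≤ Real.sqrt ((ρ/(2*(CEmbed+1)))^2) :=
              Real.sqrt_le_sqrt (min_le_right _ _)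
        _ = ρ/(2*(CEmbed+1)) := Real.sqrt_sq (by positivity)
      calc Real.sqrt δ * CEmbed ≤ (ρ/(2*(CEmbed+1))) * (CEmbed+1) :=
            mul_le_mul h1 (by linarith) hCE.le (by positivity)
      _ = ρ/2 := by field_simp
    have hmδ : (0:ℝ) < m + δ := by linarith
    have hmδ' : (0:ℝ) < m - δ := by linarith
    set κm : ℕ → ℕ := fun n => ⌊(n:ℝ)/(m+δ)⌋₊ with hκmdef
    set κp : ℕ → ℕ := fun n => ⌈(n:ℝ)/(m-δ)⌉₊ with hκpdef
    obtain ⟨hκmtop, hκmr⟩ := sqrt_ratio_lim hmδ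
      (fun n => (Nat.sub_one_lt_floor _).le)
      (fun n => le_trans (Nat.floor_le (by positivity)) (by linarith))
    obtain ⟨hκptop, hκpr⟩ := sqrt_ratio_lim hmδ'
      (fun n => by
        have := Nat.le_ceil ((n:ℝ)/(m-δ))
        linarith)
      (fun n => (Nat.ceil_lt_add_one (by positivity)).le)
    have hQm : Tendsto (fun n : ℕ => Real.sqrt n * q (κm n)) atTop
        (𝓝 (Real.sqrt (m+δ) * CEmbed)) := comp_q_lim hE hκmtop hκmr
    have hQp : Tendsto (fun n : ℕ => Real.sqrt n * q (κp n)) atTop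
        (𝓝 (Real.sqrt (m-δ) * CEmbed)) := comp_q_lim hE hκptop hκpr
    set Dev : ℕ → ℝ :=
      fun k => (P {ω | δ * k ≤ |(∑ i ∈ Finset.range k, X i ω) - m * k|}).toReal with hDevdef
    have hDev0 : ∀ k, 0 ≤ Dev k := fun k => ENNReal.toReal_nonneg
    have hDevb : ∀ ε, 0 < ε → ∀ᶠ k : ℕ in atTop, Dev k ≤ ε / Real.sqrt k :=
      fun ε hε => hDevAll δ hδ0 ε hε
    have hDm : Tendsto (fun n : ℕ => Real.sqrt n * Dev (κm n)) atTop (𝓝 0) :=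
      dev_term_lim hDev0 hDevb hκmtop hκmr
    have hDp : Tendsto (fun n : ℕ => Real.sqrt n * Dev (κp n)) atTop (𝓝 0) :=
      dev_term_lim hDev0 hDevb hκptop hκpr
    have hEvQ : ∀ n, (P {ω | n < S M (κm n) ω}).toReal ≤ Dev (κm n) := by
      intro n
      refine toReal_mono' P ?_
      intro ω hω
      have hω' : n < S M (κm n) ω := hω
      show δ * (κm n) ≤ |(∑ i ∈ Finset.range (κm n), X i ω) - m * (κm n)|
      have hcast : (n:ℝ) < ∑ i ∈ Finset.range (κm n), X i ω := by
        rw [← hcastS]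
        exact_mod_cast hω'
      have hfl : (m+δ) * (κm n) ≤ (n:ℝ) := by
        have h5 : ((κm n : ℕ):ℝ) ≤ (n:ℝ)/(m+δ) := Nat.floor_le (by positivity)
        calc (m+δ) * ((κm n : ℕ):ℝ) ≤ (m+δ) * ((n:ℝ)/(m+δ)) := by gcongr
        _ = n := by field_simp
      have h6 : δ * (κm n) ≤ (∑ i ∈ Finset.range (κm n), X i ω) - m * (κm n) := by
        nlinarith [hcast, hfl]
      exact le_trans h6 (le_abs_self _)
    have hEvP : ∀ n, (P {ω | S M (κp n) ω ≤ n}).toReal ≤ Dev (κp n) := by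
      intro n
      refine toReal_mono' P ?_
      intro ω hω
      have hω' : S M (κp n) ω ≤ n := hω
      show δ * (κp n) ≤ |(∑ i ∈ Finset.range (κp n), X i ω) - m * (κp n)|
      have hcast : (∑ i ∈ Finset.range (κp n), X i ω) ≤ (n:ℝ) := by
        rw [← hcastS]
        exact_mod_cast hω'
      have hcl : (n:ℝ) ≤ (m-δ) * (κp n) := by
        have h5 : (n:ℝ)/(m-δ) ≤ ((κp n : ℕ):ℝ) := Nat.le_ceil _
        calc (n:ℝ) = (m-δ) * ((n:ℝ)/(m-δ)) := by field_simp
        _ ≤ (m-δ) * ((κp n : ℕ):ℝ) := by gcongr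
      have h6 : δ * (κp n) ≤ -((∑ i ∈ Finset.range (κp n), X i ω) - m * (κp n)) := by
        nlinarith [hcast, hcl]
      exact le_trans h6 (neg_le_abs _)
    have hm0' : (0:ℝ) ≤ m := hm0.le
    have hup_ev : ∀ᶠ n : ℕ in atTop, Real.sqrt n * c n < Real.sqrt m * CEmbed + ρ := by
      have hlim : Tendsto (fun n : ℕ => Real.sqrt n * q (κm n) + Real.sqrt n * Dev (κm n))
          atTop (𝓝 (Real.sqrt (m+δ) * CEmbed + 0)) := hQm.add hDm
      have htarget : Real.sqrt (m+δ) * CEmbed + 0 < Real.sqrt m * CEmbed + ρ := by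
        have h7 := mul_le_mul_of_nonneg_right (sqrt_add_le' hm0' hδ0.le) hCE.le
        have h8 : (Real.sqrt m + Real.sqrt δ) * CEmbed
            = Real.sqrt m * CEmbed + Real.sqrt δ * CEmbed := by ring
        rw [h8] at h7
        linarith
      filter_upwards [hlim.eventually_lt_const htarget] with n hn
      have h8 : (0:ℝ) ≤ Real.sqrt n := Real.sqrt_nonneg _
      have e1 : Real.sqrt n * c n
          ≤ Real.sqrt n * q (κm n) + Real.sqrt n * (P {ω | n < S M (κm n) ω}).toReal := by
        rw [← mul_add]
        exact mul_le_mul_of_nonneg_left (hup n (κm n)) h8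
      have e2 : Real.sqrt n * (P {ω | n < S M (κm n) ω}).toReal
          ≤ Real.sqrt n * Dev (κm n) := mul_le_mul_of_nonneg_left (hEvQ n) h8
      linarith
    have hlo_ev : ∀ᶠ n : ℕ in atTop, Real.sqrt m * CEmbed - ρ < Real.sqrt n * c n := by
      have hlim : Tendsto (fun n : ℕ => Real.sqrt n * q (κp n) - Real.sqrt n * Dev (κp n))
          atTop (𝓝 (Real.sqrt (m-δ) * CEmbed - 0)) := hQp.sub hDp
      have htarget : Real.sqrt m * CEmbed - ρ < Real.sqrt (m-δ) * CEmbed - 0 := by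
        have h5 : Real.sqrt m ≤ Real.sqrt (m-δ) + Real.sqrt δ := by
          have h9 := sqrt_add_le' (sub_nonneg.2 hδm.le) hδ0.le
          rw [sub_add_cancel] at h9
          exact h9
        have h7 := mul_le_mul_of_nonneg_right h5 hCE.le
        have h8 : (Real.sqrt (m-δ) + Real.sqrt δ) * CEmbed
            = Real.sqrt (m-δ) * CEmbed + Real.sqrt δ * CEmbed := by ring
        rw [h8] at h7
        linarith
      filter_upwards [hlim.eventually_const_lt htarget] with n hn
      have h8 : (0:ℝ) ≤ Real.sqrt n := Real.sqrt_nonneg _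
      have e1 : Real.sqrt n * q (κp n)
          ≤ Real.sqrt n * c n + Real.sqrt n * (P {ω | S M (κp n) ω ≤ n}).toReal := by
        rw [← mul_add]
        exact mul_le_mul_of_nonneg_left (hlow n (κp n)) h8
      have e2 : Real.sqrt n * (P {ω | S M (κp n) ω ≤ n}).toReal
          ≤ Real.sqrt n * Dev (κp n) := mul_le_mul_of_nonneg_left (hEvP n) h8
      linarith
    filter_upwards [hup_ev, hlo_ev] with n h1 h2
    rw [Real.dist_eq, abs_sub_lt_iff]
    constructor <;> linarith
  -- apply the key argument to both stopped sequences
  have hA : Tendsto (fun n : ℕ =>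
      Real.sqrt n * (P {ω | 0 < M.Z (S M (theta M n ω) ω) ω}).toReal)
      atTop (𝓝 (Real.sqrt m * CEmbed)) := by
    refine key _ (fun n k => toReal_le_add' P (incl_lb_a M n k))
      (fun n k => toReal_le_add' P (incl_ub_a M n k))
  have hB : Tendsto (fun n : ℕ =>
      Real.sqrt n * (P {ω | 0 < M.Z (S M (theta M n ω - 1) ω) ω}).toReal)
      atTop (𝓝 (Real.sqrt m * CEmbed)) := by
    refine key _ (fun n k => toReal_le_add' P (incl_lb_b M n k))
      (fun n k => toReal_le_add' P (incl_ub_b M n k))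
  refine ⟨hA, hB, ?_⟩
  have hsq : Tendsto (fun n : ℕ => Real.sqrt n * (P {ω | 0 < M.Z n ω}).toReal)
      atTop (𝓝 (Real.sqrt m * CEmbed)) := by
    refine tendsto_of_tendsto_of_tendsto_of_le_of_le hA hB ?_ ?_
    · intro n
      exact mul_le_mul_of_nonneg_left (toReal_mono' P (incl_a_p M n)) (Real.sqrt_nonneg _)
    · intro n
      exact mul_le_mul_of_nonneg_left (toReal_mono' P (incl_p_b M n)) (Real.sqrt_nonneg _)
  exact tendsto_nhds_unique hS hsq

end SparseBranching
end
end

section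
/- For every N ∈ ℕ, every p ∈ (0,1) and every x ∈ (0,p), P{ 0 < N^{−1} Bin(N,p) ≤ x } ≤ p(1−p)x / (p−x)². -/
open MeasureTheory ProbabilityTheory
open scoped ENNReal

/-- Variance identity for the binomial weights, from Bernstein polynomials. -/
lemma binomial_variance_sum (N : ℕ) (p : ℝ) :
    ∑ k ∈ Finset.range (N + 1), ((N:ℝ) * p - k) ^ 2 * ((N.choose k : ℝ) * p ^ k * (1 - p) ^ (N - k))
      = N * p * (1 - p) := by
  have h := congrArg (Polynomial.eval p) (bernsteinPolynomial.variance ℝ N)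
  simp [bernsteinPolynomial, Polynomial.eval_finset_sum, mul_assoc] at h
  rw [mul_assoc, ← h]
  exact Finset.sum_congr rfl fun k _ => by ring

/-- For every `N ∈ ℕ`, every `p ∈ (0,1)` and every `x ∈ (0,p)`, a binomial
random variable `X = Bin(N,p)` (i.e. `P{X = k} = C(N,k) p^k (1-p)^{N-k}`) satisfies
`P{ 0 < N⁻¹ X ≤ x } ≤ p (1-p) x / (p-x)²`. -/
theorem binomial_small_positive_ratio
    (Ω : Type*) [MeasurableSpace Ω] (P : Measure Ω) [IsProbabilityMeasure P]
    (N : ℕ) (hN : 1 ≤ N) (p : ℝ) (hp0 : 0 < p) (hp1 : p < 1)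
    (X : Ω → ℕ)
    (hX : ∀ k : ℕ, P {ω | X ω = k}
      = ENNReal.ofReal ((N.choose k : ℝ) * p ^ k * (1 - p) ^ (N - k)))
    (x : ℝ) (hx0 : 0 < x) (hxp : x < p) :
    (P {ω | 0 < (X ω : ℝ) / N ∧ (X ω : ℝ) / N ≤ x}).toReal
      ≤ p * (1 - p) * x / (p - x) ^ 2 := by
  have hNR : (0:ℝ) < N := by exact_mod_cast hN
  have hq0 : 0 < 1 - p := by linarith
  have hpx : 0 < p - x := by linarith
  set f : ℕ → ℝ := fun k => (N.choose k : ℝ) * p ^ k * (1 - p) ^ (N - k) with hf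
  have hfnn : ∀ k, 0 ≤ f k := fun k =>
    mul_nonneg (mul_nonneg (by positivity) (by positivity)) (by positivity)
  set M : ℕ := ⌊(N:ℝ) * x⌋₊ with hM
  -- Event description
  have hEvent : {ω | 0 < (X ω : ℝ) / N ∧ (X ω : ℝ) / N ≤ x}
      = ⋃ k ∈ Finset.Icc 1 M, {ω | X ω = k} := by
    ext ω
    simp only [Set.mem_setOf_eq, Set.mem_iUnion, Finset.mem_Icc, exists_prop]
    constructor
    · rintro ⟨h1, h2⟩
      refine ⟨X ω, ⟨?_, ?_⟩, rfl⟩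
      · by_contra h
        push_neg at h
        interval_cases (X ω)
        simp at h1
      · rw [div_le_iff₀ hNR] at h2
        exact Nat.le_floor (by linarith [h2])
    · rintro ⟨k, ⟨hk1, hk2⟩, hk⟩
      have hk1' : (1:ℝ) ≤ X ω := by rw [hk]; exact_mod_cast hk1
      have hk2' : (X ω : ℝ) ≤ (N:ℝ) * x := by
        rw [hk]
        exact le_trans (by exact_mod_cast hk2) (Nat.floor_le (by positivity))
      constructor
      · positivity
      · rw [div_le_iff₀ hNR]; linarith
  rcases Nat.eq_zero_or_pos M with hM0 | hM1
  · -- floor is zero: event is empty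
    rw [hEvent, hM0]
    have he : Finset.Icc 1 0 = (∅ : Finset ℕ) := rfl
    rw [he]
    simp only [Finset.notMem_empty, Set.iUnion_of_empty, Set.iUnion_empty, measure_empty,
      ENNReal.toReal_zero]
    positivity
  · -- main case: 1 ≤ N * x
    have hNx1 : (1:ℝ) ≤ (N:ℝ) * x := by
      have h1M : (1:ℝ) ≤ M := by exact_mod_cast hM1
      calc (1:ℝ) ≤ M := h1M
        _ ≤ (N:ℝ) * x := Nat.floor_le (by positivity)
    -- bound the measure by the finite sum
    have hle1 : (P {ω | 0 < (X ω : ℝ) / N ∧ (X ω : ℝ) / N ≤ x}).toReal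
        ≤ ∑ k ∈ Finset.Icc 1 M, f k := by
      rw [hEvent]
      have h1 : P (⋃ k ∈ Finset.Icc 1 M, {ω | X ω = k})
          ≤ ∑ k ∈ Finset.Icc 1 M, ENNReal.ofReal (f k) := by
        refine le_trans (measure_biUnion_finset_le _ _) ?_
        exact Finset.sum_le_sum fun k _ => le_of_eq (hX k)
      calc (P (⋃ k ∈ Finset.Icc 1 M, {ω | X ω = k})).toReal
          ≤ (∑ k ∈ Finset.Icc 1 M, ENNReal.ofReal (f k)).toReal := by
            apply ENNReal.toReal_mono _ h1
            exact (ENNReal.sum_lt_top.mpr fun k _ => ENNReal.ofReal_lt_top).ne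
        _ = ∑ k ∈ Finset.Icc 1 M, f k := by
            rw [ENNReal.toReal_sum fun k _ => ENNReal.ofReal_ne_top]
            exact Finset.sum_congr rfl fun k _ => ENNReal.toReal_ofReal (hfnn k)
    -- Chebyshev-style bounding of each term
    have hle2 : ∑ k ∈ Finset.Icc 1 M, f k
        ≤ (∑ k ∈ Finset.range (N + 1), ((N:ℝ) * p - k) ^ 2 * f k) / ((N:ℝ) * (p - x)) ^ 2 := by
      rw [le_div_iff₀ (by positivity)]
      rw [Finset.sum_mul]
      have hsub : ∀ k ∈ Finset.Icc 1 M, f k * ((N:ℝ) * (p - x)) ^ 2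
          ≤ ((N:ℝ) * p - k) ^ 2 * f k := by
        intro k hk
        rw [Finset.mem_Icc] at hk
        have hkx : (k:ℝ) ≤ (N:ℝ) * x := by
          calc (k:ℝ) ≤ M := by exact_mod_cast hk.2
            _ ≤ (N:ℝ) * x := Nat.floor_le (by positivity)
        have h1 : (N:ℝ) * (p - x) ≤ (N:ℝ) * p - k := by nlinarith
        have h2 : ((N:ℝ) * (p - x)) ^ 2 ≤ ((N:ℝ) * p - k) ^ 2 := by
          apply sq_le_sq' <;> nlinarith
        calc f k * ((N:ℝ) * (p - x)) ^ 2 ≤ f k * ((N:ℝ) * p - k) ^ 2 :=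
              mul_le_mul_of_nonneg_left h2 (hfnn k)
          _ = ((N:ℝ) * p - k) ^ 2 * f k := by ring
      refine le_trans (Finset.sum_le_sum hsub) ?_
      -- extend the sum to range (max M N + 1) then reduce to range (N+1)
      have hterm_nn : ∀ k, 0 ≤ ((N:ℝ) * p - k) ^ 2 * f k := fun k =>
        mul_nonneg (sq_nonneg _) (hfnn k)
      refine le_trans (Finset.sum_le_sum_of_subset_of_nonneg
        (show Finset.Icc 1 M ⊆ Finset.range (max M N + 1) by
          intro k hk
          rw [Finset.mem_Icc] at hk
          rw [Finset.mem_range]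
          omega)
        (fun k _ _ => hterm_nn k)) ?_
      apply le_of_eq
      symm
      apply Finset.sum_subset
      · intro k hk
        rw [Finset.mem_range] at *
        omega
      · intro k _ hk
        rw [Finset.mem_range] at hk
        push_neg at hk
        have : N.choose k = 0 := Nat.choose_eq_zero_of_lt (by omega)
        simp [hf, this]
    have hvar := binomial_variance_sum N p
    have hle3 : (∑ k ∈ Finset.range (N + 1), ((N:ℝ) * p - k) ^ 2 * f k) / ((N:ℝ) * (p - x)) ^ 2
        = p * (1 - p) / ((N:ℝ) * (p - x) ^ 2) := by
      rw [hvar]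
      rw [mul_pow]
      field_simp
    have hle4 : p * (1 - p) / ((N:ℝ) * (p - x) ^ 2) ≤ p * (1 - p) * x / (p - x) ^ 2 := by
      rw [div_le_div_iff₀ (by positivity) (by positivity)]
      have : (1:ℝ) * (p - x)^2 ≤ ((N:ℝ) * x) * (p - x)^2 := by nlinarith
      nlinarith [mul_pos hp0 hq0]
    calc (P {ω | 0 < (X ω : ℝ) / N ∧ (X ω : ℝ) / N ≤ x}).toReal
        ≤ ∑ k ∈ Finset.Icc 1 M, f k := hle1
      _ ≤ (∑ k ∈ Finset.range (N + 1), ((N:ℝ) * p - k) ^ 2 * f k) / ((N:ℝ) * (p - x)) ^ 2 := hle2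
      _ = p * (1 - p) / ((N:ℝ) * (p - x) ^ 2) := hle3
      _ ≤ p * (1 - p) * x / (p - x) ^ 2 := hle4
end
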